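/- Let t ≥ 2 and r ≥ 3 be integers and let a, b be positive integers with a + b = r and b ≥ 2 (i.e., a < r − 1). Suppose α, β are reals with 0 < α < 2/(t+1) < β < 1, g(α) = g(β) = φ ≤ 0, and a·α + b·β = 1. Then there exist φ′ with φ < φ′ < 0 and reals α′, β′ with 0 < α′ < 2/(t+1) < β′ < 1, g(α′) = g(β′) = φ′, (a+1)·α′ + (b−1)·β′ = 1, and a·f(α) + b·f(β) < (a+1)·f(α′) + (b−1)·f(β′). -/

import Mathlib

/-!
Put `c = 2/(t+1)`: `g` decreases on `(-∞, c]`, increases on `[c, 1]` and is negative exactly on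
`(1/(t+1), 1)`. Moving one weight of the objective `a f(α) + b f(β)` from `β` to `α` while
keeping the constraint replaces `β` by `partner a b α > β`; as `g < φ` on `(α, β)` and `g > φ` on `(β, partner a b α)`, the mean value
theorem shows that this raises the objective. Then slide `x` down from `α`, keeping the pair
`(x, partner a b x)` on the constraint line: the objective has derivative
`(a + 1) (g x - g (partner a b x))`, which is negative at `α` and positive at `1/(t+1)`, so
stopping at its last zero `α'` below `α` raises the objective again and makes `g α' = g β'`.
-/

/-- `f(ρ) = (1-ρ)^t·ρ`. -/
noncomputable def ffun (t : ℕ) (ρ : ℝ) : ℝ := (1 - ρ) ^ t * ρ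

/-- `g = f'`. -/
noncomputable def gfun (t : ℕ) (ρ : ℝ) : ℝ := (1 - ρ) ^ (t - 1) * (1 - ((t : ℝ) + 1) * ρ)

open Set

section Profile

variable {t : ℕ}

theorem hasDerivAt_ffun (ht : 1 ≤ t) (x : ℝ) : HasDerivAt (ffun t) (gfun t x) x := by
  obtain ⟨k, rfl⟩ : ∃ k, t = k + 1 := ⟨t - 1, by omega⟩
  have h : HasDerivAt (fun y => (1 - y) ^ (k + 1) * y)
      ((k + 1 : ℕ) * (1 - x) ^ k * -1 * x + (1 - x) ^ (k + 1) * 1) x :=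
    (((hasDerivAt_id' x).const_sub 1).pow (k + 1)).mul (hasDerivAt_id' x)
  refine h.congr_deriv ?_
  simp only [gfun, Nat.add_sub_cancel]
  push_cast
  ring

theorem hasDerivAt_gfun (ht : 2 ≤ t) (x : ℝ) :
    HasDerivAt (gfun t) (t * (1 - x) ^ (t - 2) * ((t + 1) * x - 2)) x := by
  obtain ⟨k, rfl⟩ : ∃ k, t = k + 2 := ⟨t - 2, by omega⟩
  have h : HasDerivAt (fun y => (1 - y) ^ (k + 1) * (1 - ((k + 2 : ℕ) + 1 : ℝ) * y))
      ((k + 1 : ℕ) * (1 - x) ^ k * -1 * (1 - ((k + 2 : ℕ) + 1 : ℝ) * x)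
        + (1 - x) ^ (k + 1) * -(((k + 2 : ℕ) + 1 : ℝ) * 1)) x :=
    (((hasDerivAt_id' x).const_sub 1).pow (k + 1)).mul
      (((hasDerivAt_id' x).const_mul _).const_sub 1)
  refine h.congr_deriv ?_
  simp only [Nat.add_sub_cancel]
  push_cast
  ring

theorem continuous_gfun : Continuous (gfun t) := by
  unfold gfun; fun_prop

theorem gfun_strictAntiOn (ht : 2 ≤ t) : StrictAntiOn (gfun t) (Iic (2 / ((t : ℝ) + 1))) := by
  refine strictAntiOn_of_hasDerivWithinAt_neg (convex_Iic _) continuous_gfun.continuousOn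
    (fun x _ => (hasDerivAt_gfun ht x).hasDerivWithinAt) fun x hx => ?_
  rw [interior_Iic, mem_Iio, lt_div_iff₀ (by positivity)] at hx
  have ht' : (2 : ℝ) ≤ t := by exact_mod_cast ht
  have hx1 : 0 < 1 - x := by nlinarith
  have : (0 : ℝ) < t * (1 - x) ^ (t - 2) := by positivity
  nlinarith

theorem gfun_strictMonoOn (ht : 2 ≤ t) : StrictMonoOn (gfun t) (Icc (2 / ((t : ℝ) + 1)) 1) := by
  refine strictMonoOn_of_hasDerivWithinAt_pos (convex_Icc _ _) continuous_gfun.continuousOn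
    (fun x _ => (hasDerivAt_gfun ht x).hasDerivWithinAt) fun x hx => ?_
  rw [interior_Icc, mem_Ioo, div_lt_iff₀ (by positivity)] at hx
  have : (0 : ℝ) < t := by exact_mod_cast (by omega : 0 < t)
  have : (0 : ℝ) < 1 - x := by linarith
  have : (0 : ℝ) < (t + 1) * x - 2 := by linarith
  positivity

theorem gfun_one_div_succ : gfun t (1 / ((t : ℝ) + 1)) = 0 := by
  rw [gfun, mul_one_div_cancel (by positivity), sub_self, mul_zero]

theorem gfun_neg {x : ℝ} (hx : 1 / ((t : ℝ) + 1) < x) (hx1 : x < 1) : gfun t x < 0 := by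
  rw [div_lt_iff₀ (by positivity)] at hx
  exact mul_neg_of_pos_of_neg (pow_pos (by linarith) _) (by linarith)

theorem gfun_nonneg {x : ℝ} (hx : x ≤ 1 / ((t : ℝ) + 1)) : 0 ≤ gfun t x := by
  rw [le_div_iff₀ (by positivity)] at hx
  have : x ≤ 1 := by nlinarith [Nat.cast_nonneg (α := ℝ) t]
  exact mul_nonneg (pow_nonneg (by linarith) _) (by linarith)

end Profile

theorem sub_lt_mul_sub_of_hasDerivAt_lt {f f' : ℝ → ℝ} {x y C : ℝ}
    (hf : ∀ z, HasDerivAt f (f' z) z) (hxy : x < y) (h : ∀ z ∈ Ioo x y, f' z < C) :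
    f y - f x < C * (y - x) := by
  obtain ⟨c, hc, hslope⟩ := exists_hasDerivAt_eq_slope f f' hxy
    (fun z _ => (hf z).continuousAt.continuousWithinAt) fun z _ => hf z
  have := h c hc
  rwa [hslope, div_lt_iff₀ (sub_pos.2 hxy)] at this

theorem mul_sub_lt_sub_of_lt_hasDerivAt {f f' : ℝ → ℝ} {x y C : ℝ}
    (hf : ∀ z, HasDerivAt f (f' z) z) (hxy : x < y) (h : ∀ z ∈ Ioo x y, C < f' z) :
    C * (y - x) < f y - f x := by
  obtain ⟨c, hc, hslope⟩ := exists_hasDerivAt_eq_slope f f' hxy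
    (fun z _ => (hf z).continuousAt.continuousWithinAt) fun z _ => hf z
  have := h c hc
  rwa [hslope, lt_div_iff₀ (sub_pos.2 hxy)] at this

theorem exists_zero_forall_neg_of_pos_of_neg {G : ℝ → ℝ} {p q : ℝ} (hpq : p ≤ q)
    (hG : ContinuousOn G (Icc p q)) (hp : 0 < G p) (hq : G q < 0) :
    ∃ c ∈ Ioo p q, G c = 0 ∧ ∀ x ∈ Ioc c q, G x < 0 := by
  set Z := Icc p q ∩ G ⁻¹' Ici 0
  have hZbdd : BddAbove Z := bddAbove_Icc.mono inter_subset_left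
  obtain ⟨⟨hpc, hcq⟩, hc0⟩ : sSup Z ∈ Z :=
    (hG.preimage_isClosed_of_isClosed isClosed_Icc isClosed_Ici).csSup_mem
      ⟨p, left_mem_Icc.2 hpq, hp.le⟩ hZbdd
  set c := sSup Z
  have hneg : ∀ x ∈ Ioc c q, G x < 0 := fun x hx =>
    not_le.1 fun h => (le_csSup hZbdd ⟨⟨hpc.trans hx.1.le, hx.2⟩, h⟩).not_gt hx.1
  have hcq : c < q := hcq.lt_of_ne fun h => (h ▸ hq).not_ge hc0
  -- a positive value at `c` would give, by the intermediate value theorem, a zero to its right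
  have hGc : G c = 0 := by
    refine le_antisymm (not_lt.1 fun hpos => ?_) hc0
    obtain ⟨x, hx, hx0⟩ := intermediate_value_Icc' hcq.le (hG.mono (Icc_subset_Icc_left hpc))
      ⟨hq.le, hpos.le⟩
    refine (hneg x ⟨hx.1.lt_of_ne ?_, hx.2⟩).ne hx0
    rintro rfl
    exact hpos.ne' hx0
  exact ⟨c, ⟨hpc.lt_of_ne fun h => hp.ne' (h ▸ hGc), hcq⟩, hGc, hneg⟩

noncomputable def partner (a b x : ℝ) : ℝ := (1 - (a + 1) * x) / (b - 1)

section Partner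

variable {a b : ℝ}

theorem add_one_mul_add_sub_one_mul_partner (hb : b ≠ 1) (x : ℝ) :
    (a + 1) * x + (b - 1) * partner a b x = 1 := by
  rw [partner, mul_div_cancel₀ _ (sub_ne_zero.2 hb)]
  ring

theorem continuous_partner : Continuous (partner a b) := by
  unfold partner; fun_prop

theorem hasDerivAt_partner (x : ℝ) : HasDerivAt (partner a b) (-(a + 1) / (b - 1)) x := by
  show HasDerivAt (fun x => (1 - (a + 1) * x) / (b - 1)) _ x
  exact ((((hasDerivAt_id' x).const_mul (a + 1)).const_sub 1).div_const (b - 1)).congr_deriv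
    (by ring)

theorem partner_strictAnti (ha : -1 < a) (hb : 1 < b) : StrictAnti (partner a b) :=
  fun x y hxy => div_lt_div_of_pos_right (by nlinarith) (sub_pos.2 hb)

theorem partner_lt_one {x : ℝ} (ha : -1 < a) (hb : 2 ≤ b) (hx : 0 < x) : partner a b x < 1 := by
  rw [partner, div_lt_one (by linarith)]
  nlinarith

theorem lt_partner {x y : ℝ} (hb : 1 < b) (hxy : x < y) (hsum : a * x + b * y = 1) :
    y < partner a b x := by
  rw [partner, lt_div_iff₀ (by linarith)]
  nlinarith

end Partner

section Weighted

variable {t : ℕ} {a b α β : ℝ}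

theorem weighted_ffun_lt_weighted_ffun_partner (ht : 2 ≤ t) (hb : 1 < b)
    (hα : α < 2 / ((t : ℝ) + 1)) (hβ : 2 / ((t : ℝ) + 1) < β) (hy : partner a b α ≤ 1)
    (hg : gfun t α = gfun t β)
    (hsum : a * α + b * β = 1) :
    a * ffun t α + b * ffun t β < (a + 1) * ffun t α + (b - 1) * ffun t (partner a b α) := by
  have hf := hasDerivAt_ffun (by omega : 1 ≤ t)
  have hβy := lt_partner hb (hα.trans hβ) hsum
  have hleft : ffun t β - ffun t α < gfun t β * (β - α) :=
    sub_lt_mul_sub_of_hasDerivAt_lt hf (hα.trans hβ) fun z hz => by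
      rcases le_total z (2 / ((t : ℝ) + 1)) with hzc | hzc
      · exact hg ▸ gfun_strictAntiOn ht hα.le hzc hz.1
      · exact gfun_strictMonoOn ht ⟨hzc, by linarith [hz.2]⟩ ⟨hβ.le, by linarith⟩ hz.2
  have hright : gfun t β * (partner a b α - β) < ffun t (partner a b α) - ffun t β :=
    mul_sub_lt_sub_of_lt_hasDerivAt hf hβy fun z hz =>
      gfun_strictMonoOn ht ⟨hβ.le, by linarith⟩ ⟨by linarith [hz.1], by linarith [hz.2]⟩ hz.1
  have hline := add_one_mul_add_sub_one_mul_partner (a := a) hb.ne' α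
  linear_combination hleft + mul_lt_mul_of_pos_left hright (sub_pos.2 hb)
    - gfun t β * hline + gfun t β * hsum

theorem hasDerivAt_weighted_ffun_partner (ht : 1 ≤ t) (hb : b ≠ 1) (x : ℝ) :
    HasDerivAt (fun z => (a + 1) * ffun t z + (b - 1) * ffun t (partner a b z))
      ((a + 1) * (gfun t x - gfun t (partner a b x))) x := by
  have h := ((hasDerivAt_ffun ht x).const_mul (a + 1)).add
    (((hasDerivAt_ffun ht (partner a b x)).comp x (hasDerivAt_partner x)).const_mul (b - 1))
  refine h.congr_deriv ?_
  field_simp [sub_ne_zero.2 hb]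
  ring

end Weighted

theorem improve_skew_solution_general (t : ℕ) (ht : 2 ≤ t)
    (a b : ℕ) (hb : 2 ≤ b)
    (α β φ : ℝ) (hα : α < 2 / ((t : ℝ) + 1))
    (hβ : 2 / ((t : ℝ) + 1) < β) (hβ1 : β < 1)
    (hgα : gfun t α = φ) (hgβ : gfun t β = φ)
    (hsum : (a : ℝ) * α + (b : ℝ) * β = 1) :
    ∃ φ' α' β' : ℝ, φ < φ' ∧ φ' < 0 ∧
      0 < α' ∧ α' < 2 / ((t : ℝ) + 1) ∧ 2 / ((t : ℝ) + 1) < β' ∧ β' < 1 ∧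
      gfun t α' = φ' ∧ gfun t β' = φ' ∧
      ((a : ℝ) + 1) * α' + ((b : ℝ) - 1) * β' = 1 ∧
      (a : ℝ) * ffun t α + (b : ℝ) * ffun t β
        < ((a : ℝ) + 1) * ffun t α' + ((b : ℝ) - 1) * ffun t β' := by
  have ha : (-1 : ℝ) < a := by linarith [Nat.cast_nonneg (α := ℝ) a]
  have hb : (2 : ℝ) ≤ b := by exact_mod_cast hb
  set u := 1 / ((t : ℝ) + 1)
  set y := partner a b
  have hu : 0 < u := by positivity
  have huc : u < 2 / ((t : ℝ) + 1) := div_lt_div_of_pos_right one_lt_two (by positivity)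
  have hφ : φ < 0 := hgβ ▸ gfun_neg (huc.trans hβ) hβ1
  have huα : u < α := not_le.1 fun h => (gfun_nonneg h).not_gt (hgα ▸ hφ)
  have hy_anti : StrictAnti y := partner_strictAnti ha (by linarith)
  have hy1 : ∀ x, 0 < x → y x < 1 := fun x hx => partner_lt_one ha hb hx
  have hβy : β < y α := lt_partner (by linarith) (hα.trans hβ) hsum
  have hGu : 0 < gfun t u - gfun t (y u) := by
    rw [gfun_one_div_succ, zero_sub, neg_pos]
    exact gfun_neg (huc.trans (hβ.trans (hβy.trans (hy_anti huα)))) (hy1 u hu)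
  have hGα : gfun t α - gfun t (y α) < 0 := by
    rw [sub_neg, hgα, ← hgβ]
    exact gfun_strictMonoOn ht ⟨hβ.le, hβ1.le⟩ ⟨by linarith, (hy1 α (by linarith)).le⟩ hβy
  obtain ⟨α', ⟨huα', hα'α⟩, hG, hGneg⟩ :=
    exists_zero_forall_neg_of_pos_of_neg (G := fun x => gfun t x - gfun t (y x)) huα.le
      (continuous_gfun.sub (continuous_gfun.comp continuous_partner)).continuousOn hGu hGα
  have hslide := sub_lt_mul_sub_of_hasDerivAt_lt
    (hasDerivAt_weighted_ffun_partner (by omega) (by linarith)) hα'α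
    (C := 0) fun z hz => mul_neg_of_pos_of_neg (by linarith) (hGneg z ⟨hz.1, hz.2.le⟩)
  have hmove := weighted_ffun_lt_weighted_ffun_partner ht (by linarith) hα hβ
    (hy1 α (by linarith)).le (hgα.trans hgβ.symm) hsum
  refine ⟨gfun t α', α', y α', hgα ▸ gfun_strictAntiOn ht (hα'α.trans hα).le hα.le hα'α,
    gfun_neg huα' (by linarith), by linarith, by linarith, hβ.trans (hβy.trans (hy_anti hα'α)),
    hy1 _ (by linarith), rfl, (sub_eq_zero.1 hG).symm,
    add_one_mul_add_sub_one_mul_partner (by linarith) α', by linarith⟩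

/-- Lemma 3.7: a skew critical point with `a < r - 1` is beaten by one with
`a + 1` copies of `α'` and a larger `φ` value. -/
theorem improve_skew_solution (t r : ℕ) (ht : 2 ≤ t) (hr : 3 ≤ r)
    (a b : ℕ) (ha : 1 ≤ a) (hb : 2 ≤ b) (hab : a + b = r)
    (α β φ : ℝ) (hα0 : 0 < α) (hα : α < 2 / ((t : ℝ) + 1))
    (hβ : 2 / ((t : ℝ) + 1) < β) (hβ1 : β < 1)
    (hgα : gfun t α = φ) (hgβ : gfun t β = φ) (hφ : φ ≤ 0)
    (hsum : (a : ℝ) * α + (b : ℝ) * β = 1) :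
    ∃ φ' α' β' : ℝ, φ < φ' ∧ φ' < 0 ∧
      0 < α' ∧ α' < 2 / ((t : ℝ) + 1) ∧ 2 / ((t : ℝ) + 1) < β' ∧ β' < 1 ∧
      gfun t α' = φ' ∧ gfun t β' = φ' ∧
      ((a : ℝ) + 1) * α' + ((b : ℝ) - 1) * β' = 1 ∧
      (a : ℝ) * ffun t α + (b : ℝ) * ffun t β
        < ((a : ℝ) + 1) * ffun t α' + ((b : ℝ) - 1) * ffun t β' :=
  improve_skew_solution_general t ht a b hb α β φ hα hβ hβ1 hgα hgβ hsum
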